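/- arXiv:1808.09116 — 3 statements merged into one kernel-verified Lean document; each statement's English description precedes it below -/
import Mathlib

section
/- Let m ≥ 1 and q ≥ 2 be natural numbers, let R and S be commutative rings, and let f_1, …, f_m : R → S be ring homomorphisms. Let h, b_1, …, b_m ∈ R satisfy b_j · h^{q-1} = 0 in R for every j = 1, …, m. Then in S one has (∏_{j=1}^m f_j(b_j)) · (∑_{j=1}^m f_j(h))^{m(q-2)} = C · ∏_{j=1}^m f_j(b_j · h^{q-2}), where C = (m(q-2))! / ((q-2)!)^m is the central multinomial coefficient (a natural number). (This is the abstract ring-theoretic identity underlying the reduction step in the proof of Proposition 2.5: there R is the Chow ring of an abelian variety A of dimension q, S is the Chow ring of A^m, f_j = pr_j^* are the pullbacks along the projections, h is a symmetric ample divisor class with b·h^r = 0 for b ∈ A^2(A) and r > q-2, and H = ∑_j pr_j^*(h).) -/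
/-- Abstract ring-theoretic identity underlying the reduction step in the proof of
Proposition 2.5: if `b j * h ^ (q-1) = 0` for all `j`, then
`(∏ j, f j (b j)) * (∑ j, f j h) ^ (m * (q-2))`
equals the central multinomial coefficient `(m(q-2))! / ((q-2)!)^m` times
`∏ j, f j (b j * h ^ (q-2))`. -/
theorem stmt_0 {R S : Type*} [CommRing R] [CommRing S]
    (m q : ℕ) (hm : 1 ≤ m) (hq : 2 ≤ q)
    (f : Fin m → (R →+* S)) (h : R) (b : Fin m → R)
    (hb : ∀ j : Fin m, b j * h ^ (q - 1) = 0) :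
    (∏ j : Fin m, f j (b j)) * (∑ j : Fin m, f j h) ^ (m * (q - 2)) =
      (Nat.multinomial Finset.univ (fun _ : Fin m => q - 2) : S) *
        ∏ j : Fin m, f j (b j * h ^ (q - 2)) := by
  classical
  rw [Finset.sum_pow_eq_sum_piAntidiag, Finset.mul_sum]
  rw [Finset.sum_eq_single (fun _ : Fin m => q - 2)]
  · rw [mul_left_comm, ← Finset.prod_mul_distrib]
    congr 1
    refine Finset.prod_congr rfl fun j _ => ?_
    rw [map_mul, map_pow]
  · intro k hk hne
    rw [Finset.mem_piAntidiag] at hk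
    -- there is some j with k j ≥ q - 1
    have : ∃ j : Fin m, q - 1 ≤ k j := by
      by_contra hc
      push_neg at hc
      apply hne
      funext j
      have hle : ∀ i : Fin m, k i ≤ q - 2 := fun i => by
        have := hc i; omega
      have hsum : ∑ i : Fin m, k i = ∑ i : Fin m, (q - 2) := by
        rw [hk.1, Finset.sum_const, Finset.card_univ, Fintype.card_fin, smul_eq_mul]
      have := (Finset.sum_le_sum (fun i _ => hle i)).antisymm (le_of_eq hsum.symm)
      exact (Finset.sum_eq_sum_iff_of_le (fun i _ => hle i)).1 hsum j (Finset.mem_univ j)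
    obtain ⟨j, hj⟩ := this
    rw [mul_left_comm, ← Finset.prod_mul_distrib]
    have hz : f j (b j) * f j h ^ k j = 0 := by
      rw [← map_pow, ← map_mul]
      have : b j * h ^ k j = b j * h ^ (q - 1) * h ^ (k j - (q - 1)) := by
        rw [mul_assoc, ← pow_add]
        congr 2
        omega
      rw [this, hb j, zero_mul, map_zero]
    rw [Finset.prod_eq_zero (Finset.mem_univ j) hz, mul_zero]
  · intro habs
    exfalso
    apply habs
    rw [Finset.mem_piAntidiag]
    constructor
    · rw [Finset.sum_const, Finset.card_univ, Fintype.card_fin, smul_eq_mul]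
    · intro i _; exact Finset.mem_univ i
end

section
/- Let m ≥ 1 and q ≥ 2 be natural numbers, let R and S be commutative rings, and let f_1, …, f_m : R → S be ring homomorphisms. Let h, b_1, …, b_m ∈ R satisfy b_j · h^{q-1} = 0 in R for every j = 1, …, m. Then in S one has (∑_{σ ∈ 𝔖_m} sgn(σ) · ∏_{j=1}^m f_j(b_{σ(j)})) · (∑_{j=1}^m f_j(h))^{m(q-2)} = C · ∑_{σ ∈ 𝔖_m} sgn(σ) · ∏_{j=1}^m f_j(b_{σ(j)} · h^{q-2}), where C = (m(q-2))! / ((q-2)!)^m. (This identity is the precise relation used in the proof of Proposition 2.5 to relate the signed symmetrized external product of the codimension-2 cycles b_j on an abelian variety to that of the associated 0-cycles c_j = b_j · h^{q-2}.) -/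
/-- The signed symmetrized version of the reduction identity used in the proof of
Proposition 2.5: if `b j * h ^ (q-1) = 0` for all `j`, then
`(∑ σ, sgn σ • ∏ j, f j (b (σ j))) * (∑ j, f j h) ^ (m * (q-2))`
equals the central multinomial coefficient `(m(q-2))! / ((q-2)!)^m` times
`∑ σ, sgn σ • ∏ j, f j (b (σ j) * h ^ (q-2))`. -/
theorem stmt_1 {R S : Type*} [CommRing R] [CommRing S]
    (m q : ℕ) (hm : 1 ≤ m) (hq : 2 ≤ q)
    (f : Fin m → (R →+* S)) (h : R) (b : Fin m → R)
    (hb : ∀ j : Fin m, b j * h ^ (q - 1) = 0) :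
    (∑ σ : Equiv.Perm (Fin m),
        ((Equiv.Perm.sign σ : ℤ) • ∏ j : Fin m, f j (b (σ j)))) *
      (∑ j : Fin m, f j h) ^ (m * (q - 2)) =
      (Nat.multinomial Finset.univ (fun _ : Fin m => q - 2) : S) *
        ∑ σ : Equiv.Perm (Fin m),
          ((Equiv.Perm.sign σ : ℤ) • ∏ j : Fin m, f j (b (σ j) * h ^ (q - 2))) := by
  classical
  have hzero : ∀ (i : Fin m) (k : ℕ), q - 1 ≤ k → b i * h ^ k = 0 := by
    intro i k hk
    have : b i * h ^ k = (b i * h ^ (q - 1)) * h ^ (k - (q - 1)) := by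
      rw [mul_assoc, ← pow_add]
      congr 2
      omega
    rw [this, hb, zero_mul]
  -- key: A * ∏ (f j h)^(k j) = ∑σ sgn σ • ∏ f j (b (σ j) * h ^ k j)
  have key : ∀ k : Fin m → ℕ,
      (∑ σ : Equiv.Perm (Fin m),
        ((Equiv.Perm.sign σ : ℤ) • ∏ j : Fin m, f j (b (σ j)))) *
        (∏ j : Fin m, (f j h) ^ (k j)) =
      ∑ σ : Equiv.Perm (Fin m),
        ((Equiv.Perm.sign σ : ℤ) • ∏ j : Fin m, f j (b (σ j) * h ^ (k j))) := by
    intro k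
    rw [Finset.sum_mul]
    refine Finset.sum_congr rfl fun σ _ => ?_
    rw [smul_mul_assoc, ← Finset.prod_mul_distrib]
    congr 1
    refine Finset.prod_congr rfl fun j _ => ?_
    rw [map_mul, map_pow]
  rw [Finset.sum_pow_eq_sum_piAntidiag, Finset.mul_sum]
  have hmem : (fun _ : Fin m => q - 2) ∈ Finset.piAntidiag Finset.univ (m * (q - 2)) := by
    rw [Finset.mem_piAntidiag]
    constructor
    · simp [Finset.sum_const, mul_comm]
    · intro i _; exact Finset.mem_univ i
  rw [Finset.sum_eq_single (fun _ : Fin m => q - 2)]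
  · rw [mul_left_comm, key]
  · intro k hk hne
    rw [Finset.mem_piAntidiag] at hk
    obtain ⟨j, hj⟩ : ∃ j : Fin m, q - 1 ≤ k j := by
      by_contra hc
      push_neg at hc
      have hle : ∀ j ∈ Finset.univ, k j ≤ q - 2 := fun j _ => by have := hc j; omega
      have hsum : ∑ j : Fin m, k j = ∑ _j : Fin m, (q - 2) := by
        rw [hk.1]; simp [Finset.sum_const, mul_comm]
      have := (Finset.sum_eq_sum_iff_of_le hle).mp hsum
      exact hne (funext fun j => this j (Finset.mem_univ j))
    rw [mul_left_comm, key]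
    have : ∀ σ : Equiv.Perm (Fin m),
        (∏ i : Fin m, f i (b (σ i) * h ^ (k i))) = 0 := by
      intro σ
      apply Finset.prod_eq_zero (Finset.mem_univ j)
      rw [hzero _ _ hj, map_zero]
    simp only [this, smul_zero, Finset.sum_const_zero, mul_zero]
  · intro hc; exact absurd hmem hc
end

section
/- Let m ≥ 1 and q ≥ 2 be natural numbers, let R be a commutative ring, let S be a commutative ℚ-algebra, and let f_1, …, f_m : R → S be ring homomorphisms. Let h, b_1, …, b_m ∈ R satisfy b_j · h^{q-1} = 0 in R for every j = 1, …, m. Assume that multiplication by (∑_{j=1}^m f_j(h))^{m(q-2)} is injective as a map S → S. If ∑_{σ ∈ 𝔖_m} sgn(σ) · ∏_{j=1}^m f_j(b_{σ(j)} · h^{q-2}) = 0 in S, then ∑_{σ ∈ 𝔖_m} sgn(σ) · ∏_{j=1}^m f_j(b_{σ(j)}) = 0 in S. (This is the abstract form of the deduction in the proof of Proposition 2.5: Künnemann's hard Lefschetz theorem makes multiplication by H^{m(q-2)}, H = ∑_j pr_j^*(h), injective on the relevant Beauville component of the Chow ring of A^m, so the vanishing of the signed symmetrized product of the 0-cycles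 c_j = b_j·h^{q-2} forces the vanishing of the signed symmetrized product of the codimension-2 cycles b_j.) -/
private lemma key_prod {R S : Type*} [CommRing R] [CommRing S]
    (m q : ℕ) (hq : 2 ≤ q)
    (f : Fin m → (R →+* S)) (h : R) (c : Fin m → R)
    (hc : ∀ j : Fin m, c j * h ^ (q - 1) = 0) :
    (∏ j : Fin m, f j (c j)) * (∑ j : Fin m, f j h) ^ (m * (q - 2)) =
      (Nat.multinomial Finset.univ (fun _ : Fin m => q - 2) : S) *
        ∏ j : Fin m, f j (c j * h ^ (q - 2)) := by
  rw [Finset.sum_pow_eq_sum_piAntidiag, Finset.mul_sum]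
  have hmem : (fun _ : Fin m => q - 2) ∈ Finset.piAntidiag (Finset.univ : Finset (Fin m)) (m * (q - 2)) := by
    rw [Finset.mem_piAntidiag]
    constructor
    · simp [Finset.sum_const, mul_comm]
    · intro i _; exact Finset.mem_univ i
  rw [Finset.sum_eq_single_of_mem _ hmem]
  · rw [← mul_assoc, mul_comm (∏ j : Fin m, f j (c j)) _, mul_assoc]
    congr 1
    rw [← Finset.prod_mul_distrib]
    refine Finset.prod_congr rfl fun j _ => ?_
    rw [map_mul, map_pow]
  · intro k hk hne
    rw [Finset.mem_piAntidiag] at hk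
    by_cases hbig : ∃ j : Fin m, q - 1 ≤ k j
    · obtain ⟨j, hj⟩ := hbig
      have : f j (c j) * (f j h) ^ k j = 0 := by
        rw [← map_pow, ← map_mul, ← Nat.sub_add_cancel hj, pow_add, ← mul_assoc,
          mul_right_comm, hc j, zero_mul, map_zero]
      have hz : (∏ j : Fin m, f j (c j)) * ∏ i : Fin m, f i h ^ k i = 0 := by
        rw [← Finset.prod_mul_distrib]
        exact Finset.prod_eq_zero (Finset.mem_univ j) this
      rw [mul_left_comm, hz, mul_zero]
    · push_neg at hbig
      exfalso
      apply hne
      funext j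
      by_contra hj
      have hle : ∀ i : Fin m, k i ≤ q - 2 := fun i => by
        have := hbig i; omega
      have hlt : k j < q - 2 := lt_of_le_of_ne (hle j) hj
      have : ∑ i : Fin m, k i < ∑ _i : Fin m, (q - 2) :=
        Finset.sum_lt_sum (fun i _ => hle i) ⟨j, Finset.mem_univ j, hlt⟩
      rw [hk.1] at this
      simp [Finset.sum_const, mul_comm] at this

/-- Abstract form of the hard Lefschetz deduction in the proof of Proposition 2.5:
if multiplication by `(∑ j, f j h) ^ (m * (q-2))` is injective on the commutative
`ℚ`-algebra `S`, and the signed symmetrized product of the elements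
`f j (b (σ j) * h ^ (q-2))` vanishes, then the signed symmetrized product of the
elements `f j (b (σ j))` vanishes. -/
theorem stmt_2 {R S : Type*} [CommRing R] [CommRing S] [Algebra ℚ S]
    (m q : ℕ) (hm : 1 ≤ m) (hq : 2 ≤ q)
    (f : Fin m → (R →+* S)) (h : R) (b : Fin m → R)
    (hb : ∀ j : Fin m, b j * h ^ (q - 1) = 0)
    (hinj : Function.Injective
      (fun x : S => x * (∑ j : Fin m, f j h) ^ (m * (q - 2))))
    (hvanish : ∑ σ : Equiv.Perm (Fin m),
        ((Equiv.Perm.sign σ : ℤ) • ∏ j : Fin m, f j (b (σ j) * h ^ (q - 2))) = 0) :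
    ∑ σ : Equiv.Perm (Fin m),
        ((Equiv.Perm.sign σ : ℤ) • ∏ j : Fin m, f j (b (σ j))) = 0 := by
  apply hinj
  simp only [zero_mul]
  rw [Finset.sum_mul]
  have : ∀ σ : Equiv.Perm (Fin m),
      ((Equiv.Perm.sign σ : ℤ) • ∏ j : Fin m, f j (b (σ j))) *
        (∑ j : Fin m, f j h) ^ (m * (q - 2)) =
      (Nat.multinomial Finset.univ (fun _ : Fin m => q - 2) : S) *
        ((Equiv.Perm.sign σ : ℤ) • ∏ j : Fin m, f j (b (σ j) * h ^ (q - 2))) := by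
    intro σ
    rw [smul_mul_assoc, key_prod m q hq f h (fun j => b (σ j)) (fun j => hb (σ j)),
      mul_smul_comm]
  rw [Finset.sum_congr rfl (fun σ _ => this σ), ← Finset.mul_sum, hvanish, mul_zero]
end
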